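/- Let G be a graph and let G^s be the graph obtained from G by subdividing every edge of G exactly once. Then G^s contains K_{3,3} as an immersion if and only if G contains K_{3,3} as an immersion. -/

import Mathlib

attribute [local instance] Classical.propDecidable

set_option autoImplicit false

noncomputable section

/-- A finite undirected loopless multigraph: a finite type of vertices, a finite type of
edges, and a map assigning to every edge its (unordered) pair of distinct endpoints. -/
structure Multigraph : Type 1 where
  V : Type
  E : Type
  finV : Finite V
  finE : Finite E
  ends : E → Sym2 V
  loopless : ∀ e, ¬ (ends e).IsDiag

attribute [instance] Multigraph.finV Multigraph.finE

namespace Multigraph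

variable {G : Multigraph}

/-- Walks in a multigraph, recorded together with their two endpoints. -/
inductive Walk (G : Multigraph) : G.V → G.V → Type where
  | nil {v : G.V} : Walk G v v
  | cons {u v w : G.V} (e : G.E) (h : G.ends e = s(u, v)) (t : Walk G v w) : Walk G u w

namespace Walk

/-- The list of edges traversed by a walk. -/
def edges : ∀ {u v : G.V}, G.Walk u v → List G.E
  | _, _, nil => []
  | _, _, cons e _ t => e :: t.edges

/-- The list of vertices visited by a walk (in order). -/
def support : ∀ {u v : G.V}, G.Walk u v → List G.V
  | u, _, nil => [u]
  | u, _, cons _ _ t => u :: t.support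

/-- Concatenation of walks. -/
def append : ∀ {u v w : G.V}, G.Walk u v → G.Walk v w → G.Walk u w
  | _, _, _, nil, q => q
  | _, _, _, cons e h t, q => cons e h (t.append q)

/-- Reversal of a walk. -/
def reverse : ∀ {u v : G.V}, G.Walk u v → G.Walk v u
  | _, _, nil => nil
  | _, _, cons e h t => t.reverse.append (cons e (by rw [h]; exact Sym2.eq_swap) nil)

/-- A walk is a path if it visits no vertex twice.  (A single vertex is a trivial path.) -/
def IsPath {u v : G.V} (w : G.Walk u v) : Prop := w.support.Nodup

/-- A closed walk is a cycle if it uses at least one edge, repeats no edge, and repeats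
no vertex except that it ends where it started. -/
def IsCycle {v : G.V} (w : G.Walk v v) : Prop :=
  w.edges ≠ [] ∧ w.edges.Nodup ∧ w.support.tail.Nodup

/-- The set of edges of a walk. -/
def edgeSet {u v : G.V} (w : G.Walk u v) : Set G.E := {e | e ∈ w.edges}

/-- The set of vertices of a walk. -/
def supportSet {u v : G.V} (w : G.Walk u v) : Set G.V := {x | x ∈ w.support}

end Walk

/-- Two walks are edge-disjoint if they share no edge. -/
def EdgeDisjoint {u v u' v' : G.V} (p : G.Walk u v) (q : G.Walk u' v') : Prop :=
  ∀ e : G.E, e ∈ p.edges → e ∉ q.edges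

/-- Two vertices are reachable from one another if some walk joins them. -/
def Reachable (G : Multigraph) (u v : G.V) : Prop := Nonempty (G.Walk u v)

/-- Reachability is an equivalence relation. -/
def reachSetoid (G : Multigraph) : Setoid G.V :=
  ⟨G.Reachable,
    ⟨fun _ => ⟨Walk.nil⟩, fun ⟨w⟩ => ⟨w.reverse⟩, fun ⟨w⟩ ⟨w'⟩ => ⟨w.append w'⟩⟩⟩

/-- A multigraph is connected if every two vertices are joined by a walk. -/
def Connected (G : Multigraph) : Prop := ∀ u v : G.V, G.Reachable u v

/-- The number of connected components. -/
def numComponents (G : Multigraph) : ℕ := Nat.card (Quotient G.reachSetoid)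

/-- A set of vertices is connected in `G` if any two of its vertices are joined by a
walk staying inside the set. -/
def ConnectedIn (G : Multigraph) (S : Set G.V) : Prop :=
  ∀ u ∈ S, ∀ v ∈ S, ∃ w : G.Walk u v, ∀ x ∈ w.support, x ∈ S

/-- Reachability inside a prescribed set of vertices, using only a prescribed
set of edges. -/
def ReachableWithin (G : Multigraph) (W : Set G.V) (E₀ : Set G.E) (u v : G.V) : Prop :=
  ∃ w : G.Walk u v, (∀ x ∈ w.support, x ∈ W) ∧ ∀ e ∈ w.edges, e ∈ E₀

/-- The degree of a vertex: the number of edges incident to it. -/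
def degree (G : Multigraph) (v : G.V) : ℕ := Nat.card {e : G.E // v ∈ G.ends e}

/-- A multigraph is sub-cubic if all its vertices have degree at most `3`. -/
def SubCubic (G : Multigraph) : Prop := ∀ v : G.V, G.degree v ≤ 3

/-- Deletion of a set of edges. -/
def deleteEdges (G : Multigraph) (F : Set G.E) : Multigraph where
  V := G.V
  E := {e : G.E // e ∉ F}
  finV := G.finV
  finE := inferInstance
  ends := fun e => G.ends e.1
  loopless := fun e => G.loopless e.1

/-- An edge cut: a non-empty set of edges, all lying in one connected component,
whose deletion increases the number of connected components. -/
def IsEdgeCut (G : Multigraph) (F : Set G.E) : Prop :=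
  F.Nonempty ∧
  (∀ e ∈ F, ∀ e' ∈ F, ∀ u v : G.V, u ∈ G.ends e → v ∈ G.ends e' → G.Reachable u v) ∧
  G.numComponents < (G.deleteEdges F).numComponents

/-- A minimal edge cut: its deletion produces exactly one more connected component. -/
def IsMinimalEdgeCut (G : Multigraph) (F : Set G.E) : Prop :=
  G.IsEdgeCut F ∧ (G.deleteEdges F).numComponents = G.numComponents + 1

/-- An internal edge cut: a minimal edge cut such that both connected components into
which the component of `G` containing the cut is split have at least `2` vertices.
(Equivalently: every vertex of the component of `G` containing the cut lies, after
deletion of the cut, in a component with at least `2` vertices.) -/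
def IsInternalEdgeCut (G : Multigraph) (F : Set G.E) : Prop :=
  G.IsMinimalEdgeCut F ∧
  ∀ v : G.V, (∃ e ∈ F, ∃ u ∈ G.ends e, G.Reachable v u) →
    2 ≤ Nat.card {u : G.V | (G.deleteEdges F).Reachable u v}

/-- `H` is immersed in `G`: there is an injection `f` of the vertices of `H` into the
vertices of `G`, and for every edge `{u,v}` of `H` a path in `G` from `f u` to `f v`,
these paths being pairwise edge-disjoint. -/
def Immersion (H G : Multigraph) : Prop :=
  ∃ f : H.V → G.V, Function.Injective f ∧
    ∃ P : H.E → Σ a : G.V, Σ b : G.V, G.Walk a b,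
      (∀ e : H.E, (P e).2.2.IsPath) ∧
      (∀ e : H.E, (H.ends e).map f = s((P e).1, (P e).2.1)) ∧
      ∀ e e' : H.E, e ≠ e' → EdgeDisjoint (P e).2.2 (P e').2.2

/-- The complete graph on five vertices. -/
def K5 : Multigraph where
  V := Fin 5
  E := {p : Sym2 (Fin 5) // ¬ p.IsDiag}
  finV := inferInstance
  finE := inferInstance
  ends := fun e => e.1
  loopless := fun e => e.2

/-- The complete bipartite graph with two parts of three vertices. -/
def K33 : Multigraph where
  V := Fin 3 ⊕ Fin 3
  E := Fin 3 × Fin 3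
  finV := inferInstance
  finE := inferInstance
  ends := fun p => s(Sum.inl p.1, Sum.inr p.2)
  loopless := fun p h => by
    rw [Sym2.mk_isDiag_iff] at h
    cases h

private lemma contract_key {α : Type} (S : Set α) (z : Sym2 α) :
    ¬ z.IsDiag → (¬ ∀ v ∈ z, v ∈ S) →
    ¬ (z.map fun v =>
        if h : v ∈ S then (Sum.inr () : {v : α // v ∉ S} ⊕ Unit) else Sum.inl ⟨v, h⟩).IsDiag := by
  induction z using Sym2.ind with
  | _ a b =>
    intro hdiag hS h
    rw [Sym2.map_pair_eq, Sym2.mk_isDiag_iff] at h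
    by_cases ha : a ∈ S <;> by_cases hb : b ∈ S
    · exact hS fun v hv => by rcases Sym2.mem_iff.mp hv with rfl | rfl <;> assumption
    · rw [dif_pos ha, dif_neg hb] at h
      cases h
    · rw [dif_neg ha, dif_pos hb] at h
      cases h
    · rw [dif_neg ha, dif_neg hb] at h
      injection h with h'
      exact hdiag (Sym2.mk_isDiag_iff.mpr (congrArg Subtype.val h'))

/-- Contraction of a set `S` of vertices of `G` to a single new vertex: edges lying
entirely inside `S` disappear, edges meeting `S` are redirected to the new vertex.
(When `S` induces a connected subgraph this is the result of contracting all its edges.) -/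
def contractSet (G : Multigraph) (S : Set G.V) : Multigraph where
  V := {v : G.V // v ∉ S} ⊕ Unit
  E := {e : G.E // ¬ ∀ v ∈ G.ends e, v ∈ S}
  finV := inferInstance
  finE := inferInstance
  ends := fun e => (G.ends e.1).map fun v =>
    if h : v ∈ S then Sum.inr () else Sum.inl ⟨v, h⟩
  loopless := fun e => contract_key S (G.ends e.1) (G.loopless e.1) e.2

/-- The graph obtained from `G` by subdividing every edge exactly once: each edge `e`
is replaced by a new vertex joined to the two endpoints of `e`. -/
def subdivision (G : Multigraph) : Multigraph where
  V := G.V ⊕ G.E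
  E := Σ e : G.E, {v : G.V // v ∈ G.ends e}
  finV := inferInstance
  finE := inferInstance
  ends := fun p => s(Sum.inl p.2.1, Sum.inr p.1)
  loopless := fun p h => by
    rw [Sym2.mk_isDiag_iff] at h
    cases h

/-- The multigraph associated with a simple graph. -/
def ofSimpleGraph {α : Type} [Finite α] (H : SimpleGraph α) : Multigraph where
  V := α
  E := {p : Sym2 α // p ∈ H.edgeSet}
  finV := ‹Finite α›
  finE := inferInstance
  ends := fun e => e.1
  loopless := fun e => H.not_isDiag_of_mem_edgeSet e.2

/-- The `(r,q)`-cylinder: the cartesian product of a cycle on `r` vertices and a path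
on `q` vertices. -/
def cylinder (r q : ℕ) : Multigraph :=
  ofSimpleGraph ((SimpleGraph.cycleGraph r).boxProd (SimpleGraph.pathGraph q))

/-- `H` is a minor of `G`: there are pairwise disjoint nonempty connected branch sets
`β u ⊆ V(G)`, one for every vertex `u` of `H`, and an injection `φ` of the edges of `H`
into the edges of `G` such that the edge `φ e` joins the branch sets of the two
endpoints of `e`. -/
def IsMinor (H G : Multigraph) : Prop :=
  ∃ β : H.V → Set G.V, ∃ φ : H.E → G.E,
    Function.Injective φ ∧
    (∀ u : H.V, (β u).Nonempty) ∧
    (∀ u : H.V, G.ConnectedIn (β u)) ∧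
    (∀ u v : H.V, u ≠ v → Disjoint (β u) (β v)) ∧
    ∀ (e : H.E) (u v : H.V), H.ends e = s(u, v) →
      ∃ x y : G.V, G.ends (φ e) = s(x, y) ∧ x ∈ β u ∧ y ∈ β v

/-- The degree of a vertex of a simple graph (number of neighbours). -/
def simpleDegree {n : ℕ} (T : SimpleGraph (Fin n)) (v : Fin n) : ℕ :=
  Nat.card {u : Fin n // T.Adj v u}

/-- A branch decomposition of `G`: a ternary tree `T` together with a bijection between
the edges of `G` and the leaves of `T`. -/
structure BranchDecomposition (G : Multigraph) where
  n : ℕ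
  T : SimpleGraph (Fin n)
  acyclic : T.IsAcyclic
  preconnected : T.Preconnected
  ternary : ∀ v : Fin n, simpleDegree T v ≤ 1 ∨ simpleDegree T v = 3
  leafEquiv : G.E ≃ {v : Fin n // simpleDegree T v ≤ 1}

/-- For an edge `{a,b}` of the tree of a branch decomposition, the number of vertices of
`G` incident both with an edge mapped to a leaf on the side of `a` and with an edge
mapped to a leaf on the side of `b` (sides taken in `T` minus the edge `{a,b}`). -/
def BranchDecomposition.sigmaWidth {G : Multigraph} (B : BranchDecomposition G)
    (a b : Fin B.n) : ℕ :=
  Nat.card {x : G.V | ∃ e₁ e₂ : G.E, x ∈ G.ends e₁ ∧ x ∈ G.ends e₂ ∧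
    (B.T.deleteEdges {s(a, b)}).Reachable (B.leafEquiv e₁).1 a ∧
    (B.T.deleteEdges {s(a, b)}).Reachable (B.leafEquiv e₂).1 b}

/-- The width of a branch decomposition. -/
def BranchDecomposition.width {G : Multigraph} (B : BranchDecomposition G) : ℕ :=
  sSup {w : ℕ | ∃ a b : Fin B.n, B.T.Adj a b ∧ w = B.sigmaWidth a b}

/-- The branch-width of `G`: the minimum width of a branch decomposition of `G`. -/
def branchwidth (G : Multigraph) : ℕ :=
  sInf {w : ℕ | ∃ B : BranchDecomposition G, B.width = w}

/-- A (topological) embedding of the multigraph `G` in the space `X`: vertices become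
distinct points, edges become arcs joining the images of their endpoints, arcs meet
vertex images only at their endpoints and meet each other only at images of vertices. -/
structure EmbeddingIn (G : Multigraph) (X : Type) [TopologicalSpace X] where
  vmap : G.V → X
  emap : G.E → unitInterval → X
  vmap_inj : Function.Injective vmap
  emap_cont : ∀ e, Continuous (emap e)
  emap_inj : ∀ e, Function.Injective (emap e)
  emap_ends : ∀ e, (G.ends e).map vmap = s(emap e 0, emap e 1)
  emap_vertex : ∀ e t, emap e t ∈ Set.range vmap → t = 0 ∨ t = 1
  emap_disjoint : ∀ e e', e ≠ e' → ∀ t t', emap e t = emap e' t' →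
    emap e t ∈ Set.range vmap

variable {X : Type} [TopologicalSpace X]

/-- The set of points of `X` occupied by the embedded graph. -/
def EmbeddingIn.carrier (emb : EmbeddingIn G X) : Set X :=
  Set.range emb.vmap ∪ ⋃ e : G.E, Set.range (emb.emap e)

/-- The set of points of `X` occupied by an embedded walk. -/
def EmbeddingIn.walkImage (emb : EmbeddingIn G X) {u v : G.V} (w : G.Walk u v) : Set X :=
  (emb.vmap '' w.supportSet) ∪ ⋃ e ∈ w.edges, Set.range (emb.emap e)

/-- An open disk in `X`: an open set homeomorphic to an open disk of the plane. -/
def IsOpenDisk (U : Set X) : Prop :=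
  IsOpen U ∧ Nonempty (↥U ≃ₜ ↥(Metric.ball (0 : EuclideanSpace ℝ (Fin 2)) 1))

/-- A disk around the vertex `x`: an open disk containing (the image of) `x` all of
whose points on the graph are `x` itself or lie on edges incident with `x`. -/
def EmbeddingIn.IsDiskAround (emb : EmbeddingIn G X) (x : G.V) (Δ : Set X) : Prop :=
  IsOpenDisk Δ ∧ emb.vmap x ∈ Δ ∧
  ∀ p ∈ Δ ∩ emb.carrier,
    p = emb.vmap x ∨ ∃ e : G.E, x ∈ G.ends e ∧ p ∈ Set.range (emb.emap e)

/-- Two edge-disjoint walks are confluent if for every common vertex `x` that is not an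
endpoint of either of them and every disk `Δ` around `x`, one of the connected
components of `Δ` minus the first walk contains no point of the second walk. -/
def Confluent (emb : EmbeddingIn G X) {u₁ w₁ u₂ w₂ : G.V}
    (P₁ : G.Walk u₁ w₁) (P₂ : G.Walk u₂ w₂) : Prop :=
  ∀ x : G.V, x ∈ P₁.support → x ∈ P₂.support →
    x ≠ u₁ → x ≠ w₁ → x ≠ u₂ → x ≠ w₂ →
    ∀ Δ : Set X, emb.IsDiskAround x Δ →
      ∃ p ∈ Δ \ emb.walkImage P₁,
        connectedComponentIn (Δ \ emb.walkImage P₁) p ∩ emb.walkImage P₂ = ∅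

/-- `x` is an overlapping vertex of `P₁` and `P₂`: a common vertex, not an endpoint of
either walk, such that for some disk `Δ` around `x` both connected components of `Δ`
minus `P₁` contain points of `P₂`. -/
def OverlapVertex (emb : EmbeddingIn G X) (x : G.V) {u₁ w₁ u₂ w₂ : G.V}
    (P₁ : G.Walk u₁ w₁) (P₂ : G.Walk u₂ w₂) : Prop :=
  x ∈ P₁.support ∧ x ∈ P₂.support ∧ x ≠ u₁ ∧ x ≠ w₁ ∧ x ≠ u₂ ∧ x ≠ w₂ ∧
  ∃ Δ : Set X, emb.IsDiskAround x Δ ∧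
    ∀ p ∈ Δ \ emb.walkImage P₁,
      (connectedComponentIn (Δ \ emb.walkImage P₁) p ∩ emb.walkImage P₂).Nonempty

/-- Two walks with the same first vertex are well-arranged if their common vertices
appear in the same order in both. -/
def WellArranged {u v₁ v₂ : G.V} (P₁ : G.Walk u v₁) (P₂ : G.Walk u v₂) : Prop :=
  P₁.support.filter (fun x => decide (x ∈ P₂.support)) =
    P₂.support.filter (fun x => decide (x ∈ P₁.support))

/-- `f_𝒫(x)`: the number of pairs of walks of the collection `P` for which `x` is an
overlapping vertex. -/
def overlapCount (emb : EmbeddingIn G X) {r : ℕ} {v : G.V} {vs : Fin r → G.V}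
    (P : (i : Fin r) → G.Walk v (vs i)) (x : G.V) : ℕ :=
  Nat.card {p : Fin r × Fin r // p.1 < p.2 ∧
    (OverlapVertex emb x (P p.1) (P p.2) ∨ OverlapVertex emb x (P p.2) (P p.1))}

/-- `g(𝒫)`: the sum over all vertices `x` of `f_𝒫(x)`. -/
def gFun (emb : EmbeddingIn G X) {r : ℕ} {v : G.V} {vs : Fin r → G.V}
    (P : (i : Fin r) → G.Walk v (vs i)) : ℕ :=
  ∑ᶠ x : G.V, overlapCount emb P x

/-- The 2-dimensional sphere. -/
abbrev Sphere2 : Type := ↥(Metric.sphere (0 : EuclideanSpace ℝ (Fin 3)) 1)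

/-- A multigraph is planar if it embeds in the sphere. -/
def Planar (G : Multigraph) : Prop := Nonempty (EmbeddingIn G Sphere2)

/-- The annulus between two disjoint cycles with point sets `K₁`, `K₂` on the sphere:
the complement of the two open disks `Δᵢ` bounded by `Kᵢ` containing no point of the
other cycle. -/
def annulusBetween (K₁ K₂ : Set Sphere2) : Set Sphere2 :=
  ({x : Sphere2 | x ∉ K₁ ∧ connectedComponentIn K₁ᶜ x ∩ K₂ = ∅} ∪
   {x : Sphere2 | x ∉ K₂ ∧ connectedComponentIn K₂ᶜ x ∩ K₁ = ∅})ᶜ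

/-- A collection of `r` pairwise disjoint cycles embedded in the sphere is nested if
consecutive annuli between them compose. -/
def NestedCycles (emb : EmbeddingIn G Sphere2) (r : ℕ) (c : Fin r → G.V)
    (C : (i : Fin r) → G.Walk (c i) (c i)) : Prop :=
  (∀ i, (C i).IsCycle) ∧
  (∀ i j : Fin r, i ≠ j → ∀ x, x ∈ (C i).support → x ∉ (C j).support) ∧
  ∀ (i : Fin r) (h2 : i.1 + 2 < r),
    annulusBetween (emb.walkImage (C i)) (emb.walkImage (C ⟨i.1 + 1, by omega⟩)) ∪
      annulusBetween (emb.walkImage (C ⟨i.1 + 1, by omega⟩))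
        (emb.walkImage (C ⟨i.1 + 2, h2⟩)) =
    annulusBetween (emb.walkImage (C i)) (emb.walkImage (C ⟨i.1 + 2, h2⟩))

/-- The intersection of the walks `P` and `C` is a (possibly trivial) path: the common
vertices and common edges of `P` and `C` are exactly those of some path, in particular
`P` meets `C`. -/
def IsPathIntersection (G : Multigraph) {a b c d : G.V}
    (P : G.Walk a b) (C : G.Walk c d) : Prop :=
  ∃ (x y : G.V) (Q : G.Walk x y), Q.IsPath ∧
    Q.supportSet = P.supportSet ∩ C.supportSet ∧
    Q.edgeSet = P.edgeSet ∩ C.edgeSet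

/-- `G`, embedded in the sphere by `emb`, contains an `(r,q)`-railed annulus: `r` nested
pairwise disjoint cycles all met by `q` paths (rails), the intersection of each rail
with each cycle being a (possibly trivial) path. -/
def HasRailedAnnulus (G : Multigraph) (emb : EmbeddingIn G Sphere2) (r q : ℕ) : Prop :=
  ∃ (c : Fin r → G.V) (C : (i : Fin r) → G.Walk (c i) (c i)),
    NestedCycles emb r c C ∧
    ∃ (a b : Fin q → G.V) (P : (j : Fin q) → G.Walk (a j) (b j)),
      (∀ j, (P j).IsPath) ∧
      ∀ (i : Fin r) (j : Fin q), IsPathIntersection G (P j) (C i)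

/-- `G` is a `k`-edge-sum of `G₁` and `G₂`: there are vertices `v₁` of `G₁` and `v₂` of
`G₂`, both of degree `k`, and a bijection `σ` between the edges at `v₁` and the edges at
`v₂`, such that `G` is obtained from the disjoint union of `G₁` and `G₂` by deleting
`v₁` and `v₂` and lifting every pair `e`, `σ e` to a single new edge. -/
def IsEdgeSum (G G₁ G₂ : Multigraph) (k : ℕ) : Prop :=
  ∃ (v₁ : G₁.V) (v₂ : G₂.V),
    G₁.degree v₁ = k ∧ G₂.degree v₂ = k ∧
    ∃ (σ : {e : G₁.E // v₁ ∈ G₁.ends e} ≃ {e : G₂.E // v₂ ∈ G₂.ends e})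
      (fV : ({u : G₁.V // u ≠ v₁} ⊕ {u : G₂.V // u ≠ v₂}) ≃ G.V)
      (fE : ({e : G₁.E // v₁ ∉ G₁.ends e} ⊕ {e : G₂.E // v₂ ∉ G₂.ends e} ⊕
        {e : G₁.E // v₁ ∈ G₁.ends e}) ≃ G.E),
      (∀ (e : G₁.E) (he : v₁ ∉ G₁.ends e) (a b : G₁.V), G₁.ends e = s(a, b) →
        ∃ (ha : a ≠ v₁) (hb : b ≠ v₁),
          G.ends (fE (Sum.inl ⟨e, he⟩)) = s(fV (Sum.inl ⟨a, ha⟩), fV (Sum.inl ⟨b, hb⟩))) ∧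
      (∀ (e : G₂.E) (he : v₂ ∉ G₂.ends e) (a b : G₂.V), G₂.ends e = s(a, b) →
        ∃ (ha : a ≠ v₂) (hb : b ≠ v₂),
          G.ends (fE (Sum.inr (Sum.inl ⟨e, he⟩))) =
            s(fV (Sum.inr ⟨a, ha⟩), fV (Sum.inr ⟨b, hb⟩))) ∧
      ∀ (e : {e : G₁.E // v₁ ∈ G₁.ends e}) (a : G₁.V) (b : G₂.V),
        G₁.ends e.1 = s(v₁, a) → G₂.ends (σ e).1 = s(v₂, b) →
        ∃ (ha : a ≠ v₁) (hb : b ≠ v₂),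
          G.ends (fE (Sum.inr (Sum.inr e))) =
            s(fV (Sum.inl ⟨a, ha⟩), fV (Sum.inr ⟨b, hb⟩))

/-- `G` can be constructed by applying consecutive `i`-edge-sums, for `i ≤ 3`,
starting from graphs satisfying the predicate `base`. -/
inductive ConstructibleFrom (base : Multigraph → Prop) : Multigraph → Prop where
  | base (G : Multigraph) : base G → ConstructibleFrom base G
  | edgeSum (G G₁ G₂ : Multigraph) (k : ℕ) (hk : k ≤ 3) :
      ConstructibleFrom base G₁ → ConstructibleFrom base G₂ →
      IsEdgeSum G G₁ G₂ k → ConstructibleFrom base G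

end Multigraph

/-!
Paths of `G` lift edge by edge to paths of the subdivision. Conversely, a branch vertex of
an immersion has degree at most that of its image, so the branch vertices of `K₃,₃`, of
degree `3`, avoid the subdivision vertices, of degree `2`; the paths between them then
project back to edge-disjoint paths of `G`.
-/

namespace Multigraph

variable {G H : Multigraph}

namespace Walk

lemma start_mem_support {u v : G.V} : ∀ w : G.Walk u v, u ∈ w.support
  | .nil => List.mem_singleton_self u
  | .cons _ _ _ => List.mem_cons_self

lemma mem_support_of_mem_edges {x : G.V} {e : G.E} (hx : x ∈ G.ends e) :
    ∀ {u v : G.V} (w : G.Walk u v), e ∈ w.edges → x ∈ w.support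
  | _, _, .nil, he => absurd he List.not_mem_nil
  | _, _, .cons e' h t, he => by
    rcases List.mem_cons.mp he with rfl | he
    · rw [h, Sym2.mem_iff] at hx
      rcases hx with rfl | rfl
      · exact List.mem_cons_self
      · exact List.mem_cons_of_mem _ t.start_mem_support
    · exact List.mem_cons_of_mem _ (mem_support_of_mem_edges hx t he)

lemma exists_mem_edges_of_ne {a b x : G.V} (w : G.Walk a b) (hab : a ≠ b)
    (hx : x ∈ s(a, b)) : ∃ e ∈ w.edges, x ∈ G.ends e := by
  induction w with
  | nil => exact absurd rfl hab
  | @cons a m b e h t ih =>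
    rcases Sym2.mem_iff.mp hx with rfl | rfl
    · exact ⟨e, List.mem_cons_self, h ▸ Sym2.mem_mk_left _ _⟩
    · by_cases hm : m = x
      · exact ⟨e, List.mem_cons_self, h ▸ hm ▸ Sym2.mem_mk_right _ _⟩
      · obtain ⟨e', he', hxe'⟩ := ih hm (Sym2.mem_mk_right _ _)
        exact ⟨e', List.mem_cons_of_mem _ he', hxe'⟩

end Walk

structure ImmersionMap (H G : Multigraph) where
  toFun : H.V → G.V
  injective : Function.Injective toFun
  path : H.E → Σ a : G.V, Σ b : G.V, G.Walk a b
  isPath : ∀ e, (path e).2.2.IsPath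
  map_ends : ∀ e, (H.ends e).map toFun = s((path e).1, (path e).2.1)
  edgeDisjoint : ∀ e e', e ≠ e' → EdgeDisjoint (path e).2.2 (path e').2.2

theorem immersion_iff_nonempty_immersionMap : Immersion H G ↔ Nonempty (ImmersionMap H G) :=
  ⟨fun ⟨f, hf, P, hP, hends, hdisj⟩ => ⟨⟨f, hf, P, hP, hends, hdisj⟩⟩,
    fun ⟨φ⟩ => ⟨φ.toFun, φ.injective, φ.path, φ.isPath, φ.map_ends, φ.edgeDisjoint⟩⟩

namespace ImmersionMap

/-- The paths of the edges at `u` leave `φ u` through pairwise distinct edges. -/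
theorem degree_le (φ : ImmersionMap H G) (u : H.V) : H.degree u ≤ G.degree (φ.toFun u) := by
  have hleave : ∀ e : {e : H.E // u ∈ H.ends e},
      ∃ e' ∈ (φ.path e.1).2.2.edges, φ.toFun u ∈ G.ends e' := by
    rintro ⟨e, hu⟩
    have hne : (φ.path e).1 ≠ (φ.path e).2.1 := fun h => by
      have hdiag : ((H.ends e).map φ.toFun).IsDiag := by
        rw [φ.map_ends e]; exact Sym2.mk_isDiag_iff.mpr h
      exact H.loopless e ((Sym2.isDiag_map φ.injective).mp hdiag)
    exact (φ.path e).2.2.exists_mem_edges_of_ne hne (φ.map_ends e ▸ Sym2.mem_map.mpr ⟨u, hu, rfl⟩)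
  choose g hg hgu using hleave
  refine Nat.card_le_card_of_injective (fun e => ⟨g e, hgu e⟩) fun e₁ e₂ h => ?_
  by_contra hne
  have hg₁₂ : g e₁ = g e₂ := congrArg Subtype.val h
  exact φ.edgeDisjoint e₁.1 e₂.1 (fun h' => hne (Subtype.ext h')) _ (hg e₁) (hg₁₂ ▸ hg e₂)

end ImmersionMap

theorem three_le_degree_K33 (u : K33.V) : 3 ≤ K33.degree u := by
  have hinj : ∃ g : Fin 3 → {p : K33.E // u ∈ K33.ends p}, Function.Injective g := by
    cases u with
    | inl i =>
      exact ⟨fun k => ⟨(i, k), Sym2.mem_mk_left _ _⟩,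
        fun a b h => congrArg (fun p => p.1.2) h⟩
    | inr j =>
      exact ⟨fun k => ⟨(k, j), Sym2.mem_mk_right _ _⟩,
        fun a b h => congrArg (fun p => p.1.1) h⟩
  obtain ⟨g, hg⟩ := hinj
  exact (Nat.card_fin 3).symm.le.trans (Nat.card_le_card_of_injective g hg)

section Subdivision

open Sum

lemma fst_eq_of_inr_mem_ends_subdivision {e : G.E} {s : G.subdivision.E}
    (hs : inr e ∈ G.subdivision.ends s) : s.1 = e := by
  rcases Sym2.mem_iff.mp hs with h | h
  · cases h
  · exact (inr_injective h).symm

theorem degree_subdivision_inr_le_two (e : G.E) : G.subdivision.degree (inr e) ≤ 2 := by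
  obtain ⟨a, b, hab⟩ : ∃ a b, G.ends e = s(a, b) := Sym2.ind (fun a b => ⟨a, b, rfl⟩) (G.ends e)
  have hinj : Function.Injective
      fun s : {s : G.subdivision.E // inr e ∈ G.subdivision.ends s} => decide (s.1.2.1 = a) := by
    rintro ⟨⟨e₁, x₁, hx₁⟩, hs₁⟩ ⟨⟨e₂, x₂, hx₂⟩, hs₂⟩ hdec
    obtain rfl := fst_eq_of_inr_mem_ends_subdivision hs₁
    obtain rfl := fst_eq_of_inr_mem_ends_subdivision hs₂
    obtain rfl : x₁ = x₂ := by
      rw [hab, Sym2.mem_iff] at hx₁ hx₂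
      simp only [decide_eq_decide] at hdec
      grind
    rfl
  exact (Nat.card_le_card_of_injective _ hinj).trans_eq (by simp)

namespace Walk

def subdivide : ∀ {u v : G.V}, G.Walk u v → G.subdivision.Walk (inl u) (inl v)
  | _, _, .nil => .nil
  | u, _, .cons (v := m) e h t =>
    .cons ⟨e, u, h ▸ Sym2.mem_mk_left _ _⟩ rfl
      (.cons ⟨e, m, h ▸ Sym2.mem_mk_right _ _⟩ Sym2.eq_swap t.subdivide)

lemma fst_mem_edges_of_mem_edges_subdivide : ∀ {u v : G.V} (w : G.Walk u v)
    {s : G.subdivision.E}, s ∈ w.subdivide.edges → s.1 ∈ w.edges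
  | _, _, .nil, _, hs => absurd hs List.not_mem_nil
  | _, _, .cons e h t, s, hs => by
    rcases List.mem_cons.mp hs with rfl | hs
    · exact List.mem_cons_self
    rcases List.mem_cons.mp hs with rfl | hs
    · exact List.mem_cons_self
    · exact List.mem_cons_of_mem _ (t.fst_mem_edges_of_mem_edges_subdivide hs)

lemma mem_support_subdivide : ∀ {u v : G.V} (w : G.Walk u v) {x : G.subdivision.V},
    x ∈ w.subdivide.support → (∃ a ∈ w.support, x = inl a) ∨ ∃ e ∈ w.edges, x = inr e
  | u, _, .nil, x, hx => Or.inl ⟨u, List.mem_singleton_self u, List.mem_singleton.mp hx⟩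
  | u, _, .cons e h t, x, hx => by
    rcases List.mem_cons.mp hx with rfl | hx
    · exact Or.inl ⟨u, List.mem_cons_self, rfl⟩
    rcases List.mem_cons.mp hx with rfl | hx
    · exact Or.inr ⟨e, List.mem_cons_self, rfl⟩
    rcases t.mem_support_subdivide hx with ⟨a, ha, rfl⟩ | ⟨e', he', rfl⟩
    · exact Or.inl ⟨a, List.mem_cons_of_mem _ ha, rfl⟩
    · exact Or.inr ⟨e', List.mem_cons_of_mem _ he', rfl⟩

lemma IsPath.subdivide : ∀ {u v : G.V} {w : G.Walk u v}, w.IsPath → w.subdivide.IsPath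
  | _, _, .nil, _ => List.nodup_singleton _
  | u, _, .cons e h t, hw => by
    obtain ⟨hu, ht⟩ := List.nodup_cons.mp hw
    refine List.nodup_cons.mpr ⟨?_, List.nodup_cons.mpr ⟨?_, IsPath.subdivide ht⟩⟩
    · rintro (_ | ⟨_, hx⟩)
      · rcases t.mem_support_subdivide ‹_› with ⟨a, ha, hua⟩ | ⟨_, _, h'⟩
        · exact hu (inl_injective hua ▸ ha)
        · cases h'
    · intro hx
      rcases t.mem_support_subdivide hx with ⟨_, _, h'⟩ | ⟨e', he', hee'⟩
      · cases h'
      · exact hu (mem_support_of_mem_edges (h ▸ Sym2.mem_mk_left _ _) t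
          ((show e = e' from inr_injective hee') ▸ he'))

/-- A detour `u, e, u` through a subdivision vertex is dropped; every other pass through a
subdivision vertex `e` becomes the edge `e`. -/
theorem exists_walk_of_subdivision : ∀ {x y : G.subdivision.V} (W : G.subdivision.Walk x y)
    {u v : G.V}, x = inl u → y = inl v → ∃ w : G.Walk u v,
      (w.support.map inl).Sublist W.support ∧ ∀ s : G.subdivision.E, s.1 ∈ w.edges → s ∈ W.edges
  | _, _, .nil, u, v, hx, hy => by
    obtain rfl := inl_injective (hx.symm.trans hy)
    subst hx
    exact ⟨.nil, List.Sublist.refl _, fun _ hs => absurd hs List.not_mem_nil⟩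
  | _, _, .cons s h .nil, u, v, hx, hy => by
    subst hx hy
    rcases Sym2.eq_iff.mp h with ⟨-, h⟩ | ⟨-, h⟩ <;> cases h
  | _, _, .cons s h (.cons s' h' t), u, v, hx, hy => by
    have ih := @exists_walk_of_subdivision _ _ t
    subst hx
    obtain ⟨e, x, hx⟩ := s
    obtain ⟨e', x', hx'⟩ := s'
    obtain ⟨hxu, rfl⟩ | ⟨-, h⟩ := Sym2.eq_iff.mp h
    swap; · cases h
    obtain ⟨h', -⟩ | ⟨rfl, hee⟩ := Sym2.eq_iff.mp h'
    · cases h'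
    cases inl_injective hxu
    cases inr_injective hee
    obtain ⟨w, hsub, hedges⟩ := ih rfl hy
    have hedges' : ∀ s : G.subdivision.E, s.1 ∈ w.edges → s ∈ t.edges := hedges
    by_cases hxx' : x = x'
    · subst hxx'
      exact ⟨w, (hsub.cons _).cons _,
        fun s hs => List.mem_cons_of_mem _ (List.mem_cons_of_mem _ (hedges' s hs))⟩
    have he : G.ends e = s(x, x') := (Sym2.mem_and_mem_iff hxx').mp ⟨hx, hx'⟩
    refine ⟨.cons e he w, (hsub.cons _).cons_cons _, ?_⟩
    rintro ⟨e₀, z, hz⟩ hs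
    rcases List.mem_cons.mp hs with rfl | hs
    · rcases Sym2.mem_iff.mp (he ▸ hz) with rfl | rfl
      · exact List.mem_cons_self
      · exact List.mem_cons_of_mem _ List.mem_cons_self
    · exact List.mem_cons_of_mem _ (List.mem_cons_of_mem _ (hedges' _ hs))

end Walk

theorem immersion_subdivision (h : Immersion H G) : Immersion H G.subdivision := by
  obtain ⟨φ⟩ := immersion_iff_nonempty_immersionMap.mp h
  have hends : ∀ e, (H.ends e).map ((inl : G.V → G.V ⊕ G.E) ∘ φ.toFun) =
      s(inl (φ.path e).1, inl (φ.path e).2.1) := fun e => by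
    rw [← Sym2.map_map, φ.map_ends e, Sym2.map_mk]
  exact immersion_iff_nonempty_immersionMap.mpr
    ⟨⟨inl ∘ φ.toFun, inl_injective.comp φ.injective,
      fun e => ⟨_, _, (φ.path e).2.2.subdivide⟩, fun e => (φ.isPath e).subdivide,
      hends, fun e e' hne s hs hs' => φ.edgeDisjoint e e' hne s.1
        ((φ.path e).2.2.fst_mem_edges_of_mem_edges_subdivide hs)
        ((φ.path e').2.2.fst_mem_edges_of_mem_edges_subdivide hs')⟩⟩

theorem immersion_of_immersion_subdivision (h : Immersion H G.subdivision)
    (hH : ∀ u, 3 ≤ H.degree u) : Immersion H G := by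
  obtain ⟨φ⟩ := immersion_iff_nonempty_immersionMap.mp h
  have hbranch : ∀ u, ∃ a, φ.toFun u = inl a := fun u => by
    cases hu : φ.toFun u with
    | inl a => exact ⟨a, rfl⟩
    | inr e =>
      have := hu ▸ φ.degree_le u
      have := degree_subdivision_inr_le_two e
      have := hH u
      omega
  choose g hg using hbranch
  have hproj : ∀ e, ∃ Q : Σ a : G.V, Σ b : G.V, G.Walk a b, Q.2.2.IsPath ∧
      (H.ends e).map g = s(Q.1, Q.2.1) ∧
      ∀ s : G.subdivision.E, s.1 ∈ Q.2.2.edges → s ∈ (φ.path e).2.2.edges := by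
    intro e
    obtain ⟨x, y, hxy⟩ : ∃ x y, H.ends e = s(x, y) := Sym2.ind (fun x y => ⟨x, y, rfl⟩) (H.ends e)
    have hends := φ.map_ends e
    rw [hxy, Sym2.map_mk, hg, hg] at hends
    rw [hxy, Sym2.map_mk]
    rcases Sym2.eq_iff.mp hends with ⟨ha, hb⟩ | ⟨ha, hb⟩
    · obtain ⟨w, hsub, hedges⟩ := (φ.path e).2.2.exists_walk_of_subdivision ha.symm hb.symm
      exact ⟨⟨_, _, w⟩, (hsub.nodup (φ.isPath e)).of_map _, rfl, hedges⟩
    · obtain ⟨w, hsub, hedges⟩ := (φ.path e).2.2.exists_walk_of_subdivision hb.symm ha.symm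
      exact ⟨⟨_, _, w⟩, (hsub.nodup (φ.isPath e)).of_map _, Sym2.eq_swap, hedges⟩
  choose Q hQpath hQends hQedges using hproj
  refine immersion_iff_nonempty_immersionMap.mpr
    ⟨⟨g, fun a b hab => φ.injective (by rw [hg, hg, hab]), Q, hQpath, hQends, ?_⟩⟩
  intro e e' hne z hz hz'
  let s : G.subdivision.E := ⟨z, _, Sym2.out_fst_mem (G.ends z)⟩
  exact φ.edgeDisjoint e e' hne s (hQedges e s hz) (hQedges e' s hz')

end Subdivision

theorem statement9 (G : Multigraph) :
    Immersion K33 G.subdivision ↔ Immersion K33 G :=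
  ⟨fun h => immersion_of_immersion_subdivision h three_le_degree_K33, immersion_subdivision⟩

end Multigraph
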